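/- On ℝ⁵ with coordinates (x, y₀, y₁, y₂, y₃), define the smooth 1-forms θ₀ = dy₀ − y₁ dx, θ₁ = dy₁ − y₂ dx, θ₂ = dy₂ − y₃ dx − y₃ θ₁ + (3/10) y₃² θ₀, θ₃ = dy₃ − 3 y₃ dy₂ − (3/10) y₃² θ₁ + (6/5) y₃³ θ₀, and σ = dx + θ₁ − (3/5) y₃ θ₀. Then there exist smooth 1-forms α, β, γ on ℝ⁵ and smooth functions I₀, T₁, T₆, T₇ on ℝ⁵ such that the following structure equations hold, with T₂ = (12/5) y₃, T₃ = 3/5, T₄ = −1: dσ = α∧σ + θ₀∧(T₁θ₁ + T₂θ₂ + T₃θ₃) + T₄ θ₁∧θ₂; dθ₀ = β∧θ₀ + σ∧θ₁; dθ₁ = (β−α)∧θ₁ + γ∧θ₀ + σ∧θ₂; dθ₂ = (β−2α)∧θ₂ + (4/3)γ∧θ₁ + σ∧θ₃; dθ₃ = (β−3α)∧θ₃ + γ∧θ₂ + I₀ σ∧θ₀ + T₆ θ₀∧θ₁ + T₇ θ₀∧θ₂. -/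

import Mathlib

noncomputable section

/-- The exterior derivative of a smooth 1-form `η`, as a scalar-valued 2-form:
`dη(x)(u,v) = (fderiv ℝ η x u)(v) − (fderiv ℝ η x v)(u)`. -/
def d1 {E : Type*} [NormedAddCommGroup E] [NormedSpace ℝ E]
    (η : E → (E →L[ℝ] ℝ)) (x u v : E) : ℝ :=
  fderiv ℝ η x u v - fderiv ℝ η x v u

/-- The wedge product of two 1-forms, as a scalar-valued 2-form. -/
def wedge {E : Type*} [NormedAddCommGroup E] [NormedSpace ℝ E]
    (η ζ : E → (E →L[ℝ] ℝ)) (x u v : E) : ℝ :=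
  η x u * ζ x v - η x v * ζ x u

/-- Coordinates on `ℝ⁵` are `(x, y₀, y₁, y₂, y₃) = (p 0, p 1, p 2, p 3, p 4)`;
`dcoord i` is the (constant) differential of the `i`-th coordinate. -/
def dcoord (i : Fin 5) : (Fin 5 → ℝ) →L[ℝ] ℝ := ContinuousLinearMap.proj i

/-- `θ₀ = dy₀ − y₁ dx`. -/
def θ₀ (p : Fin 5 → ℝ) : (Fin 5 → ℝ) →L[ℝ] ℝ := dcoord 1 - p 2 • dcoord 0

/-- `θ₁ = dy₁ − y₂ dx`. -/
def θ₁ (p : Fin 5 → ℝ) : (Fin 5 → ℝ) →L[ℝ] ℝ := dcoord 2 - p 3 • dcoord 0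

/-- `θ₂ = dy₂ − y₃ dx − y₃ θ₁ + (3/10) y₃² θ₀`. -/
def θ₂ (p : Fin 5 → ℝ) : (Fin 5 → ℝ) →L[ℝ] ℝ :=
  dcoord 3 - p 4 • dcoord 0 - p 4 • θ₁ p + (3 / 10 * (p 4) ^ 2) • θ₀ p

/-- `θ₃ = dy₃ − 3y₃ dy₂ − (3/10) y₃² θ₁ + (6/5) y₃³ θ₀`. -/
def θ₃ (p : Fin 5 → ℝ) : (Fin 5 → ℝ) →L[ℝ] ℝ :=
  dcoord 4 - (3 * p 4) • dcoord 3 - (3 / 10 * (p 4) ^ 2) • θ₁ p + (6 / 5 * (p 4) ^ 3) • θ₀ p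

/-- `σ = dx + θ₁ − (3/5) y₃ θ₀`. -/
def σ' (p : Fin 5 → ℝ) : (Fin 5 → ℝ) →L[ℝ] ℝ :=
  dcoord 0 + θ₁ p - (3 / 5 * p 4) • θ₀ p

section Aux

open ContinuousLinearMap

@[simp] lemma dcoord_apply (i : Fin 5) (v : Fin 5 → ℝ) : dcoord i v = v i := rfl

lemma hasFDerivAt_coord (i : Fin 5) (p : Fin 5 → ℝ) :
    HasFDerivAt (fun q : Fin 5 → ℝ => q i) (dcoord i) p :=
  (dcoord i).hasFDerivAt

lemma θ₀_apply (p v : Fin 5 → ℝ) : θ₀ p v = v 1 - p 2 * v 0 := by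
  simp [θ₀]

lemma θ₁_apply (p v : Fin 5 → ℝ) : θ₁ p v = v 2 - p 3 * v 0 := by
  simp [θ₁]

lemma θ₂_apply (p v : Fin 5 → ℝ) :
    θ₂ p v = (-(p 4) + p 3 * p 4 - 3/10 * p 2 * p 4 ^ 2) * v 0
      + (3/10 * p 4 ^ 2) * v 1 - p 4 * v 2 + v 3 := by
  simp [θ₂, θ₁_apply, θ₀_apply]; ring

lemma θ₃_apply (p v : Fin 5 → ℝ) :
    θ₃ p v = (3/10 * p 3 * p 4 ^ 2 - 6/5 * p 2 * p 4 ^ 3) * v 0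
      + (6/5 * p 4 ^ 3) * v 1 - (3/10 * p 4 ^ 2) * v 2 - 3 * p 4 * v 3 + v 4 := by
  simp [θ₃, θ₁_apply, θ₀_apply]; ring

lemma σ'_apply (p v : Fin 5 → ℝ) :
    σ' p v = (1 - p 3 + 3/5 * p 2 * p 4) * v 0 - (3/5 * p 4) * v 1 + v 2 := by
  simp [σ', θ₁_apply, θ₀_apply]; ring


lemma hasFDerivAt_sq (p : Fin 5 → ℝ) :
    HasFDerivAt (fun q : Fin 5 → ℝ => q 4 ^ 2) ((2 * p 4) • dcoord 4) p := by
  have e : (fun q : Fin 5 → ℝ => q 4 ^ 2) = fun q => q 4 * q 4 := funext fun q => pow_two _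
  rw [e]
  have h : HasFDerivAt (fun q : Fin 5 → ℝ => q 4 * q 4) _ p :=
    (hasFDerivAt_coord 4 p).mul (hasFDerivAt_coord 4 p)
  refine h.congr_fderiv ?_
  ext v
  simp [ContinuousLinearMap.smul_apply, smul_eq_mul]
  ring

lemma hasFDerivAt_cube (p : Fin 5 → ℝ) :
    HasFDerivAt (fun q : Fin 5 → ℝ => q 4 ^ 3) ((3 * p 4 ^ 2) • dcoord 4) p := by
  have e : (fun q : Fin 5 → ℝ => q 4 ^ 3) = fun q => q 4 ^ 2 * q 4 := funext fun q => pow_succ _ 2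
  rw [e]
  have h : HasFDerivAt (fun q : Fin 5 → ℝ => q 4 ^ 2 * q 4) _ p :=
    (hasFDerivAt_sq p).mul (hasFDerivAt_coord 4 p)
  refine h.congr_fderiv ?_
  ext v
  simp [ContinuousLinearMap.smul_apply, smul_eq_mul]
  ring

lemma d1_θ₀ (p u v : Fin 5 → ℝ) : d1 θ₀ p u v = u 0 * v 2 - u 2 * v 0 := by
  have h : HasFDerivAt θ₀ _ p :=
    (hasFDerivAt_const (dcoord 1) p).sub ((hasFDerivAt_coord 2 p).smul_const (dcoord 0))
  rw [d1, h.fderiv]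
  simp; ring

lemma d1_θ₁ (p u v : Fin 5 → ℝ) : d1 θ₁ p u v = u 0 * v 3 - u 3 * v 0 := by
  have h : HasFDerivAt θ₁ _ p :=
    (hasFDerivAt_const (dcoord 2) p).sub ((hasFDerivAt_coord 3 p).smul_const (dcoord 0))
  rw [d1, h.fderiv]
  simp; ring

lemma d1_θ₂ (p u v : Fin 5 → ℝ) :
    d1 θ₂ p u v = (3/10 * p 4 ^ 2) * (u 0 * v 2 - u 2 * v 0)
      - p 4 * (u 0 * v 3 - u 3 * v 0)
      + (1 - p 3 + 3/5 * p 2 * p 4) * (u 0 * v 4 - u 4 * v 0)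
      - (3/5 * p 4) * (u 1 * v 4 - u 4 * v 1)
      + (u 2 * v 4 - u 4 * v 2) := by
  have h1 : HasFDerivAt θ₁ _ p :=
    (hasFDerivAt_const (dcoord 2) p).sub ((hasFDerivAt_coord 3 p).smul_const (dcoord 0))
  have h0 : HasFDerivAt θ₀ _ p :=
    (hasFDerivAt_const (dcoord 1) p).sub ((hasFDerivAt_coord 2 p).smul_const (dcoord 0))
  have h : HasFDerivAt θ₂ _ p :=
    (((hasFDerivAt_const (dcoord 3) p).sub ((hasFDerivAt_coord 4 p).smul_const (dcoord 0))).sub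
      ((hasFDerivAt_coord 4 p).smul h1)).add
      (((hasFDerivAt_sq p).const_mul (3/10)).smul h0)
  rw [d1, h.fderiv]
  simp [θ₀_apply, θ₁_apply]; ring

lemma d1_θ₃ (p u v : Fin 5 → ℝ) :
    d1 θ₃ p u v = (6/5 * p 4 ^ 3) * (u 0 * v 2 - u 2 * v 0)
      - (3/10 * p 4 ^ 2) * (u 0 * v 3 - u 3 * v 0)
      + (-(3/5) * p 3 * p 4 + 18/5 * p 2 * p 4 ^ 2) * (u 0 * v 4 - u 4 * v 0)
      - (18/5 * p 4 ^ 2) * (u 1 * v 4 - u 4 * v 1)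
      + (3/5 * p 4) * (u 2 * v 4 - u 4 * v 2)
      + 3 * (u 3 * v 4 - u 4 * v 3) := by
  have h1 : HasFDerivAt θ₁ _ p :=
    (hasFDerivAt_const (dcoord 2) p).sub ((hasFDerivAt_coord 3 p).smul_const (dcoord 0))
  have h0 : HasFDerivAt θ₀ _ p :=
    (hasFDerivAt_const (dcoord 1) p).sub ((hasFDerivAt_coord 2 p).smul_const (dcoord 0))
  have h : HasFDerivAt θ₃ _ p :=
    (((hasFDerivAt_const (dcoord 4) p).sub
        (((hasFDerivAt_coord 4 p).const_mul 3).smul_const (dcoord 3))).sub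
      (((hasFDerivAt_sq p).const_mul (3/10)).smul h1)).add
      (((hasFDerivAt_cube p).const_mul (6/5)).smul h0)
  rw [d1, h.fderiv]
  simp [θ₀_apply, θ₁_apply]; ring

lemma d1_σ' (p u v : Fin 5 → ℝ) :
    d1 σ' p u v = -(3/5 * p 4) * (u 0 * v 2 - u 2 * v 0)
      + (u 0 * v 3 - u 3 * v 0)
      - (3/5 * p 2) * (u 0 * v 4 - u 4 * v 0)
      + (3/5) * (u 1 * v 4 - u 4 * v 1) := by
  have h1 : HasFDerivAt θ₁ _ p :=
    (hasFDerivAt_const (dcoord 2) p).sub ((hasFDerivAt_coord 3 p).smul_const (dcoord 0))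
  have h0 : HasFDerivAt θ₀ _ p :=
    (hasFDerivAt_const (dcoord 1) p).sub ((hasFDerivAt_coord 2 p).smul_const (dcoord 0))
  have h : HasFDerivAt σ' _ p :=
    ((hasFDerivAt_const (dcoord 0) p).add h1).sub
      (((hasFDerivAt_coord 4 p).const_mul (3/5)).smul h0)
  rw [d1, h.fderiv]
  simp [θ₀_apply, θ₁_apply]; ring

end Aux

/-- The coframe (9) adapted to the Lagrangian `∫ e^{−3y″} dx` is a section of the
reduced bundle `B₁`: there are connection forms `α, β, γ` and torsion functions
`I₀, T₁, T₆, T₇` so that the variational Fels structure equations hold with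
`T₂ = (12/5)y₃`, `T₃ = 3/5`, `T₄ = −1`. -/
theorem lagrangian_example_coframe_is_section_of_B1 :
    ∃ α β γ : (Fin 5 → ℝ) → ((Fin 5 → ℝ) →L[ℝ] ℝ),
    ∃ I0 T1 T6 T7 : (Fin 5 → ℝ) → ℝ,
      ContDiff ℝ (⊤ : ℕ∞) α ∧ ContDiff ℝ (⊤ : ℕ∞) β ∧ ContDiff ℝ (⊤ : ℕ∞) γ ∧
      ContDiff ℝ (⊤ : ℕ∞) I0 ∧ ContDiff ℝ (⊤ : ℕ∞) T1 ∧
      ContDiff ℝ (⊤ : ℕ∞) T6 ∧ ContDiff ℝ (⊤ : ℕ∞) T7 ∧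
      (∀ p u v, d1 σ' p u v =
        wedge α σ' p u v
        + wedge θ₀ (fun q => T1 q • θ₁ q + (12 / 5 * q 4) • θ₂ q + (3 / 5 : ℝ) • θ₃ q) p u v
        + (-1 : ℝ) * wedge θ₁ θ₂ p u v) ∧
      (∀ p u v, d1 θ₀ p u v = wedge β θ₀ p u v + wedge σ' θ₁ p u v) ∧
      (∀ p u v, d1 θ₁ p u v =
        wedge (fun q => β q - α q) θ₁ p u v + wedge γ θ₀ p u v + wedge σ' θ₂ p u v) ∧
      (∀ p u v, d1 θ₂ p u v =
        wedge (fun q => β q - (2 : ℝ) • α q) θ₂ p u v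
        + (4 / 3) * wedge γ θ₁ p u v + wedge σ' θ₃ p u v) ∧
      (∀ p u v, d1 θ₃ p u v =
        wedge (fun q => β q - (3 : ℝ) • α q) θ₃ p u v + wedge γ θ₂ p u v
        + I0 p * wedge σ' θ₀ p u v + T6 p * wedge θ₀ θ₁ p u v + T7 p * wedge θ₀ θ₂ p u v) := by
  have hc : ∀ i : Fin 5, ContDiff ℝ (⊤ : ℕ∞) (fun p : Fin 5 → ℝ => p i) :=
    fun i => (dcoord i).contDiff
  have cθ₀ : ContDiff ℝ (⊤ : ℕ∞) θ₀ := contDiff_const.sub ((hc 2).smul contDiff_const)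
  have cθ₁ : ContDiff ℝ (⊤ : ℕ∞) θ₁ := contDiff_const.sub ((hc 3).smul contDiff_const)
  have cθ₂ : ContDiff ℝ (⊤ : ℕ∞) θ₂ :=
    ((contDiff_const.sub ((hc 4).smul contDiff_const)).sub ((hc 4).smul cθ₁)).add
      ((contDiff_const.mul ((hc 4).pow 2)).smul cθ₀)
  have cσ : ContDiff ℝ (⊤ : ℕ∞) σ' :=
    (contDiff_const.add cθ₁).sub ((contDiff_const.mul (hc 4)).smul cθ₀)
  refine ⟨fun p => (-(p 4)) • σ' p + (21/10 * p 4 ^ 2) • θ₀ p - (2/5 * p 4) • θ₁ p - θ₂ p,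
    fun p => (18/5 * p 4 ^ 2) • θ₀ p - (3/5 * p 4) • θ₁ p,
    fun p => (-(3/10 * p 4 ^ 2)) • σ' p - (9/100 * p 4 ^ 3) • θ₀ p
      + (6/5 * p 4 ^ 2) • θ₁ p - (3/5 * p 4) • θ₂ p,
    fun p => 729/100 * p 4 ^ 4,
    fun p => 3/25 * p 4 ^ 2,
    fun _ => 0,
    fun p => -(729/100) * p 4 ^ 3,
    ?_, ?_, ?_, ?_, ?_, ?_, ?_, ?_, ?_, ?_, ?_, ?_⟩
  · exact ((((((hc 4).neg).smul cσ).add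
      ((contDiff_const.mul ((hc 4).pow 2)).smul cθ₀)).sub
      ((contDiff_const.mul (hc 4)).smul cθ₁)).sub cθ₂)
  · exact ((contDiff_const.mul ((hc 4).pow 2)).smul cθ₀).sub
      ((contDiff_const.mul (hc 4)).smul cθ₁)
  · exact ((((contDiff_const.mul ((hc 4).pow 2)).neg.smul cσ).sub
      ((contDiff_const.mul ((hc 4).pow 3)).smul cθ₀)).add
      ((contDiff_const.mul ((hc 4).pow 2)).smul cθ₁)).sub
      ((contDiff_const.mul (hc 4)).smul cθ₂)
  · exact contDiff_const.mul ((hc 4).pow 4)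
  · exact contDiff_const.mul ((hc 4).pow 2)
  · exact contDiff_const
  · exact contDiff_const.mul ((hc 4).pow 3)
  · intro p u v
    simp only [wedge, d1_σ', θ₀_apply, θ₁_apply, θ₂_apply, θ₃_apply, σ'_apply,
      ContinuousLinearMap.add_apply, ContinuousLinearMap.sub_apply,
      ContinuousLinearMap.smul_apply, smul_eq_mul]
    ring
  · intro p u v
    simp only [wedge, d1_θ₀, θ₀_apply, θ₁_apply, θ₂_apply, θ₃_apply, σ'_apply,
      ContinuousLinearMap.add_apply, ContinuousLinearMap.sub_apply,
      ContinuousLinearMap.smul_apply, smul_eq_mul]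
    ring
  · intro p u v
    simp only [wedge, d1_θ₁, θ₀_apply, θ₁_apply, θ₂_apply, θ₃_apply, σ'_apply,
      ContinuousLinearMap.add_apply, ContinuousLinearMap.sub_apply,
      ContinuousLinearMap.smul_apply, smul_eq_mul]
    ring
  · intro p u v
    simp only [wedge, d1_θ₂, θ₀_apply, θ₁_apply, θ₂_apply, θ₃_apply, σ'_apply,
      ContinuousLinearMap.add_apply, ContinuousLinearMap.sub_apply,
      ContinuousLinearMap.smul_apply, smul_eq_mul]
    ring
  · intro p u v
    simp only [wedge, d1_θ₃, θ₀_apply, θ₁_apply, θ₂_apply, θ₃_apply, σ'_apply,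
      ContinuousLinearMap.add_apply, ContinuousLinearMap.sub_apply,
      ContinuousLinearMap.smul_apply, smul_eq_mul]
    ring
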